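/- Let G, H ⊆ binom(ℕ,d) be finite families of d-sets with |G| = |H|. If G is compressed and H is both left-compressed and right-compressed, then |Inc(G)| ≤ |Inc(H)|. -/

import Mathlib

def Inc1 : Set (ℕ → ℕ) := {π | StrictMono π ∧ ∀ j, π j ≤ j + 1}

def incF (F : Set (Finset ℕ)) : Set (Finset ℕ) :=
  {v | ∃ u ∈ F, ∃ π ∈ Inc1, v = u.image π}

def compressionIn (A : Set ℕ) (d n : ℕ) : Set (Finset ℕ) :=
  {v | ↑v ⊆ A ∧ v.card = d ∧
    {w : Finset ℕ | ↑w ⊆ A ∧ w.card = d ∧ toColex w ≤ toColex v}.ncard ≤ n}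

def IsCompressedIn (A : Set ℕ) (d : ℕ) (F : Set (Finset ℕ)) : Prop :=
  (∀ u ∈ F, ↑u ⊆ A ∧ u.card = d) ∧
  ∀ u ∈ F, ∀ v : Finset ℕ, ↑v ⊆ A → v.card = d → toColex v ≤ toColex u → v ∈ F

def hatL (F : Set (Finset ℕ)) (k : ℕ) : Set (Finset ℕ) :=
  {u | (∀ x ∈ u, k < x) ∧ insert k u ∈ F}

def hatR (F : Set (Finset ℕ)) (k : ℕ) : Set (Finset ℕ) :=
  {u | (∀ x ∈ u, x < k) ∧ insert k u ∈ F}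

def leftComp (d : ℕ) (F : Set (Finset ℕ)) : Set (Finset ℕ) :=
  ⋃ k : ℕ, {v | ∃ w ∈ compressionIn {j | k < j} (d - 1) (hatL F k).ncard, v = insert k w}

def rightComp (d : ℕ) (F : Set (Finset ℕ)) : Set (Finset ℕ) :=
  ⋃ k : ℕ, {v | ∃ w ∈ compressionIn Set.univ (d - 1) (hatR F k).ncard, v = insert k w}

def BorelLE (u v : Finset ℕ) : Prop :=
  List.Forall₂ (· ≤ ·) (u.sort (· ≤ ·)) (v.sort (· ≤ ·))

def IsShifted (F : Set (Finset ℕ)) : Prop :=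
  ∀ u ∈ F, ∀ v, BorelLE v u → v ∈ F

def piShift (i : ℕ) : ℕ → ℕ := fun j => if j < i then j else j + 1

def IsBinRep (d m s : ℕ) (a : ℕ → ℕ) : Prop :=
  1 ≤ s ∧ s ≤ d ∧ (∀ i, s ≤ i → i < d → a i < a (i + 1)) ∧ s ≤ a s ∧
    m = ∑ i ∈ Finset.Icc s d, Nat.choose (a i) i

def famLE (F G : Set (Finset ℕ)) : Prop :=
  F = G ∨ ∃ m ∈ G, m ∉ F ∧
    ∀ w : Finset ℕ, (w ∈ F ∧ w ∉ G) ∨ (w ∈ G ∧ w ∉ F) → toColex w ≤ toColex m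

def IsSimplicialComplex (Δ : Set (Finset ℕ)) : Prop :=
  Δ.Finite ∧ ∀ F ∈ Δ, ∀ G ⊆ F, G ∈ Δ

/-!
Every `π ∈ Inc₁` is the identity or some `piShift i`, which fixes `[0, i)` and moves every
`j ≥ i` to `j + 1`. Write `mex u` for the least natural number outside `u`. The sets
`u.image (piShift i)` with `u ∈ F` and `i ≤ mex u` are pairwise distinct (`i` is recovered as
their `mex`), so `|Inc F| ≥ ∑_{u ∈ F} (mex u + 1)` for every family `F`. If `F` is compressed,
every `v ∈ Inc F` arises this way: undoing the shift at `mex v` instead of at the original `i`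
only moves the preimage down in colex order, so it stays in `F`. Hence `|Inc G| ≤ |Inc H|`
reduces to `∑_{u ∈ G} mex u ≤ ∑_{u ∈ H} mex u`, and as `mex u = 0` unless `0 ∈ u`, for `d ≥ 2`
to showing that every `u₀ ∈ G` containing `0` lies in `H`. Otherwise right-compression lets us
replace the minimum of any `u ∈ H` by `0`, and left-compression at `0` then places `u` strictly
below `u₀` in colex order; so `H ⊆ G \ {u₀}`, contradicting `|G| = |H|`.
For `d = 1`, `∑_{u ∈ G} mex u ≤ 1`, while `|Inc H| > |H|` since shifting the colex-largest
member of `H` up produces a new set.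
-/

open Finset

noncomputable def mex (s : Finset ℕ) : ℕ := sInf {j | j ∉ s}

section Mex

variable {s : Finset ℕ} {j : ℕ}

lemma mex_notMem (s : Finset ℕ) : mex s ∉ s :=
  Nat.sInf_mem (s := {j | j ∉ s}) s.exists_notMem

lemma mex_le_of_notMem (h : j ∉ s) : mex s ≤ j := Nat.sInf_le h

lemma mem_of_lt_mex (h : j < mex s) : j ∈ s := by
  simpa using Nat.notMem_of_lt_sInf h

lemma le_mex_iff : j ≤ mex s ↔ ∀ k < j, k ∈ s :=
  ⟨fun h _ hk => mem_of_lt_mex (hk.trans_le h),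
    fun h => le_of_not_gt fun hlt => mex_notMem s (h _ hlt)⟩

lemma mex_le_card (s : Finset ℕ) : mex s ≤ #s := by
  simpa using card_le_card fun k (hk : k ∈ range (mex s)) => mem_of_lt_mex (mem_range.1 hk)

lemma sum_mex_le_sum_mex {𝒜 ℬ : Finset (Finset ℕ)} (h : ∀ u ∈ 𝒜, 0 ∈ u → u ∈ ℬ) :
    ∑ u ∈ 𝒜, mex u ≤ ∑ u ∈ ℬ, mex u := by
  rw [← sum_filter_of_ne (p := fun u => 0 ∈ u) fun u _ hu => mem_of_lt_mex (Nat.pos_of_ne_zero hu)]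
  exact sum_le_sum_of_subset fun u hu => h u (mem_filter.1 hu).1 (mem_filter.1 hu).2

lemma sum_mex_le_one {𝒜 : Finset (Finset ℕ)} (h𝒜 : ∀ u ∈ 𝒜, #u = 1) : ∑ u ∈ 𝒜, mex u ≤ 1 := by
  refine (sum_mex_le_sum_mex (ℬ := {{0}}) fun u hu h0 => ?_).trans ?_
  · obtain ⟨a, rfl⟩ := card_eq_one.1 (h𝒜 u hu)
    rw [mem_singleton.1 h0, mem_singleton]
  · simpa using mex_le_card {0}

end Mex

section Shift

variable {s : Finset ℕ} {i j x : ℕ}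

lemma piShift_of_lt (h : x < i) : piShift i x = x := if_pos h

lemma piShift_of_le (h : i ≤ x) : piShift i x = x + 1 := if_neg (not_lt.2 h)

lemma piShift_strictMono (i : ℕ) : StrictMono (piShift i) := by
  intro a b hab
  unfold piShift
  split_ifs <;> omega

lemma piShift_mem_Inc1 (i : ℕ) : piShift i ∈ Inc1 :=
  ⟨piShift_strictMono i, fun j => by unfold piShift; split_ifs <;> omega⟩

lemma notMem_image_piShift : i ∉ s.image (piShift i) := by
  simp only [mem_image, not_exists, not_and]
  intro x _
  unfold piShift
  split_ifs <;> omega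

lemma image_piShift_of_subset_range (h : s ⊆ range i) : s.image (piShift i) = s := by
  conv_rhs => rw [← image_id (s := s)]
  exact image_congr fun x hx => piShift_of_lt (mem_range.1 (h hx))

lemma mex_image_piShift (h : i ≤ mex s) : mex (s.image (piShift i)) = i :=
  le_antisymm (mex_le_of_notMem notMem_image_piShift) <| le_mex_iff.2 fun k hk =>
    mem_image.2 ⟨k, mem_of_lt_mex (hk.trans_le h), piShift_of_lt hk⟩

lemma image_piShift_inj {u w : Finset ℕ} (hi : i ≤ mex u) (hj : j ≤ mex w)
    (h : u.image (piShift i) = w.image (piShift j)) : u = w ∧ i = j := by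
  obtain rfl : i = j := by rw [← mex_image_piShift hi, h, mex_image_piShift hj]
  exact ⟨image_injective (piShift_strictMono i).injective h, rfl⟩

def unshift (i x : ℕ) : ℕ := if x < i then x else x - 1

lemma unshift_of_lt (h : x < i) : unshift i x = x := if_pos h

lemma unshift_left_mono (x : ℕ) : Monotone (unshift · x) := by
  intro a b hab
  dsimp only [unshift]
  split_ifs <;> omega

lemma unshift_injOn (h : i ∉ s) : Set.InjOn (unshift i) s := by
  intro x hx y hy hxy
  have : x ≠ i := ne_of_mem_of_not_mem hx h
  have : y ≠ i := ne_of_mem_of_not_mem hy h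
  unfold unshift at hxy
  split_ifs at hxy <;> omega

lemma image_unshift_image_piShift (s : Finset ℕ) (i : ℕ) :
    (s.image (piShift i)).image (unshift i) = s := by
  rw [image_image]
  conv_rhs => rw [← image_id (s := s)]
  refine image_congr fun x _ => ?_
  simp only [Function.comp_apply, unshift, piShift, id]
  split_ifs <;> omega

lemma image_piShift_image_unshift (h : i ∉ s) : (s.image (unshift i)).image (piShift i) = s := by
  rw [image_image]
  conv_rhs => rw [← image_id (s := s)]
  refine image_congr fun x hx => ?_
  have : x ≠ i := ne_of_mem_of_not_mem hx h
  simp only [Function.comp_apply, unshift, piShift, id]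
  split_ifs <;> omega

end Shift

lemma toColex_image_le_toColex_image_of_le {s : Finset ℕ} {f g : ℕ → ℕ}
    (hf : Set.InjOn f s) (hg : Set.InjOn g s) (hfg : ∀ x ∈ s, f x ≤ g x) :
    toColex (s.image f) ≤ toColex (s.image g) := by
  rw [← geomSum_le_geomSum_iff_toColex_le_toColex le_rfl, sum_image hf, sum_image hg]
  exact sum_le_sum fun x hx => Nat.pow_le_pow_right two_pos (hfg x hx)

lemma toColex_insert_lt_toColex_insert {α : Type*} [LinearOrder α] {s t : Finset α} {x : α}
    (hst : toColex s < toColex t) (hcard : #s = #t) (hx : ∀ z ∈ s, x < z) (y : α) :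
    toColex (insert x s) < toColex (insert y t) := by
  obtain ⟨a, hat, has, hmax⟩ := Colex.toColex_lt_toColex_iff_exists_forall_lt.1 hst
  obtain ⟨b, hbs, hbt⟩ := not_subset.1 fun hsub : s ⊆ t =>
    hst.ne (congrArg toColex (eq_of_subset_of_card_le hsub hcard.ge))
  have hxa : x < a := (hx b hbs).trans (hmax b hbs hbt)
  refine Colex.toColex_lt_toColex_iff_exists_forall_lt.2
    ⟨a, mem_insert_of_mem hat, ?_, fun c hc hct => ?_⟩
  · rw [mem_insert, not_or]
    exact ⟨hxa.ne', has⟩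
  · rcases mem_insert.1 hc with rfl | hcs
    · exact hxa
    · exact hmax c hcs fun h => hct (mem_insert_of_mem h)

lemma eq_id_or_eq_piShift_of_mem_Inc1 {π : ℕ → ℕ} (hπ : π ∈ Inc1) :
    π = id ∨ ∃ i, π = piShift i := by
  obtain ⟨hmono, hle⟩ := hπ
  by_cases h : ∃ j, π j ≠ j
  · obtain ⟨i, hi, hbelow⟩ : ∃ i, π i ≠ i ∧ ∀ j < i, π j = j :=
      ⟨Nat.find h, Nat.find_spec h, fun j hj => not_not.1 (Nat.find_min h hj)⟩
    have habove : ∀ k, π (i + k) = i + k + 1 := by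
      intro k
      induction k with
      | zero =>
        have : i ≤ π i := hmono.id_le i
        have := hle i
        rw [Nat.add_zero]
        omega
      | succ k ih =>
        rw [← Nat.add_assoc]
        have := hmono (Nat.lt_add_one (i + k))
        have := hle (i + k + 1)
        omega
    refine Or.inr ⟨i, funext fun j => ?_⟩
    rcases lt_or_ge j i with hj | hj
    · rw [piShift_of_lt hj, hbelow j hj]
    · obtain ⟨k, rfl⟩ := Nat.exists_eq_add_of_le hj
      rw [piShift_of_le hj, habove]
  · push Not at h
    exact Or.inl (funext h)

lemma mem_incF_iff {F : Set (Finset ℕ)} {v : Finset ℕ} :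
    v ∈ incF F ↔ ∃ u ∈ F, ∃ i, v = u.image (piShift i) := by
  constructor
  · rintro ⟨u, hu, π, hπ, rfl⟩
    rcases eq_id_or_eq_piShift_of_mem_Inc1 hπ with rfl | ⟨i, rfl⟩
    · obtain ⟨n, hn⟩ := u.exists_nat_subset_range
      exact ⟨u, hu, n, by rw [image_id, image_piShift_of_subset_range hn]⟩
    · exact ⟨u, hu, i, rfl⟩
  · rintro ⟨u, hu, i, rfl⟩
    exact ⟨u, hu, piShift i, piShift_mem_Inc1 i, rfl⟩

lemma subset_incF (F : Set (Finset ℕ)) : F ⊆ incF F :=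
  fun u hu => ⟨u, hu, id, ⟨strictMono_id, fun j => j.le_succ⟩, image_id.symm⟩

lemma incF_finite {F : Set (Finset ℕ)} (hF : F.Finite) : (incF F).Finite := by
  refine (hF.biUnion fun u _ => (u ∪ u.image Nat.succ).powerset.finite_toSet).subset ?_
  rintro v ⟨u, hu, π, hπ, rfl⟩
  refine Set.mem_biUnion hu (mem_coe.2 (mem_powerset.2 fun y hy => ?_))
  obtain ⟨x, hx, rfl⟩ := mem_image.1 hy
  rcases (hπ.1.id_le x).eq_or_lt with h | h
  · exact mem_union_left _ (h ▸ hx)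
  · have := hπ.2 x
    exact mem_union_right _ (mem_image.2 ⟨x, hx, by simp only [id] at h; omega⟩)

lemma sum_mex_add_one_le_ncard_incF (𝒜 : Finset (Finset ℕ)) :
    ∑ u ∈ 𝒜, (mex u + 1) ≤ (incF ↑𝒜).ncard := by
  set pairs : Finset (Σ _ : Finset ℕ, ℕ) := 𝒜.sigma fun u => range (mex u + 1)
  have hinj : Set.InjOn (fun p : Σ _ : Finset ℕ, ℕ => p.1.image (piShift p.2)) ↑pairs := by
    rintro ⟨u, i⟩ hp ⟨w, j⟩ hq h
    simp only [pairs, coe_sigma, Set.mem_sigma_iff, mem_coe, mem_range] at hp hq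
    obtain ⟨rfl, rfl⟩ := image_piShift_inj (Nat.lt_succ_iff.1 hp.2) (Nat.lt_succ_iff.1 hq.2) h
    rfl
  calc ∑ u ∈ 𝒜, (mex u + 1) = (pairs : Set (Σ _ : Finset ℕ, ℕ)).ncard := by
        rw [Set.ncard_coe_finset, card_sigma]
        simp
    _ ≤ (incF ↑𝒜).ncard := by
        refine Set.ncard_le_ncard_of_injOn _ (fun p hp => ?_) hinj (incF_finite 𝒜.finite_toSet)
        exact mem_incF_iff.2 ⟨p.1, (mem_sigma.1 hp).1, p.2, rfl⟩

lemma exists_eq_image_piShift_mex_of_isCompressedIn {d : ℕ} {F : Set (Finset ℕ)}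
    (hF : IsCompressedIn Set.univ d F) {v : Finset ℕ} (hv : v ∈ incF F) :
    ∃ u ∈ F, mex v ≤ mex u ∧ v = u.image (piShift (mex v)) := by
  obtain ⟨u, hu, i, rfl⟩ := mem_incF_iff.1 hv
  set v := u.image (piShift i)
  have hiv : i ∉ v := notMem_image_piShift
  have hjv : mex v ∉ v := mex_notMem v
  have hcard : #(v.image (unshift (mex v))) = d := by
    rw [card_image_of_injOn (unshift_injOn hjv),
      card_image_of_injective _ (piShift_strictMono i).injective, (hF.1 u hu).2]
  have hle : toColex (v.image (unshift (mex v))) ≤ toColex u := by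
    conv_rhs => rw [← image_unshift_image_piShift u i]
    exact toColex_image_le_toColex_image_of_le (unshift_injOn hjv) (unshift_injOn hiv)
      fun x _ => unshift_left_mono x (mex_le_of_notMem hiv)
  refine ⟨_, hF.2 u hu _ (Set.subset_univ _) hcard hle, le_mex_iff.2 fun k hk => ?_,
    (image_piShift_image_unshift hjv).symm⟩
  exact mem_image.2 ⟨k, mem_of_lt_mex hk, unshift_of_lt hk⟩

lemma ncard_incF_le_sum_mex_add_one {d : ℕ} {𝒜 : Finset (Finset ℕ)}
    (h𝒜 : IsCompressedIn Set.univ d ↑𝒜) : (incF ↑𝒜).ncard ≤ ∑ u ∈ 𝒜, (mex u + 1) := by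
  set shifts := (𝒜.sigma fun u => range (mex u + 1)).image fun p => p.1.image (piShift p.2)
  have hsub : incF ↑𝒜 ⊆ ↑shifts := by
    intro v hv
    obtain ⟨u, hu, hle, h⟩ := exists_eq_image_piShift_mex_of_isCompressedIn h𝒜 hv
    exact mem_image.2 ⟨⟨u, mex v⟩, mem_sigma.2 ⟨hu, mem_range.2 (Nat.lt_succ_of_le hle)⟩, h.symm⟩
  calc (incF ↑𝒜).ncard ≤ #shifts := by
        simpa using Set.ncard_le_ncard hsub shifts.finite_toSet
    _ ≤ #(𝒜.sigma fun u => range (mex u + 1)) := card_image_le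
    _ = ∑ u ∈ 𝒜, (mex u + 1) := by simp [card_sigma]

lemma card_lt_ncard_incF {𝒜 : Finset (Finset ℕ)} (h𝒜 : 𝒜.Nonempty) (hempty : ∅ ∉ 𝒜) :
    #𝒜 < (incF ↑𝒜).ncard := by
  obtain ⟨u, hu, hmax⟩ := exists_max_image 𝒜 toColex h𝒜
  have hne : u.Nonempty := nonempty_iff_ne_empty.2 fun h => hempty (h ▸ hu)
  have hlt : toColex u < toColex (u.image Nat.succ) :=
    Colex.toColex_lt_toColex_iff_exists_forall_lt.2 ⟨u.max' hne + 1,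
      mem_image_of_mem _ (max'_mem _ _), fun h => by have := le_max' _ _ h; omega,
      fun b hb _ => Nat.lt_succ_of_le (le_max' _ _ hb)⟩
  have hnew : u.image Nat.succ ∉ 𝒜 := fun h => (hmax _ h).not_gt hlt
  have hsub : insert (u.image Nat.succ) (↑𝒜 : Set (Finset ℕ)) ⊆ incF ↑𝒜 :=
    Set.insert_subset ⟨u, hu, Nat.succ, ⟨fun _ _ h => Nat.succ_lt_succ h, fun _ => le_rfl⟩, rfl⟩
      (subset_incF _)
  calc #𝒜 < (insert (u.image Nat.succ) (↑𝒜 : Set (Finset ℕ))).ncard := by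
        rw [Set.ncard_insert_of_notMem (mem_coe.not.2 hnew) 𝒜.finite_toSet, Set.ncard_coe_finset]
        exact lt_add_one _
    _ ≤ (incF ↑𝒜).ncard := Set.ncard_le_ncard hsub (incF_finite 𝒜.finite_toSet)

lemma exists_insert_eq_and_insert_zero_mem {d : ℕ} {F : Set (Finset ℕ)}
    (hF : ∀ k, IsCompressedIn Set.univ d (hatR F k)) {u : Finset ℕ} (hu : u ∈ F)
    (hu2 : 1 < #u) : ∃ x w, (∀ y ∈ w, x < y) ∧ insert x w = u ∧ insert 0 w ∈ F := by
  have hne : u.Nonempty := card_pos.1 (by omega)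
  set x := u.min' hne
  set m := u.max' hne
  refine ⟨x, u.erase x, fun y hy => min'_lt_of_mem_erase_min' _ _ hy,
    insert_erase (min'_mem _ _), ?_⟩
  by_cases h0 : 0 ∈ u
  · rwa [show x = 0 from Nat.le_zero.1 (min'_le _ _ h0), insert_erase h0]
  have hxm : x < m := min'_lt_max'_of_card _ hu2
  have hw : u.erase m ∈ hatR F m :=
    ⟨fun y hy => lt_max'_of_mem_erase_max' _ _ hy, by rwa [insert_erase (max'_mem _ _)]⟩
  have hx : x ∈ u.erase m := mem_erase.2 ⟨hxm.ne, min'_mem _ _⟩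
  have h0' : 0 ∉ (u.erase m).erase x := fun h => h0 (mem_of_mem_erase (mem_of_mem_erase h))
  have hle : toColex (insert 0 ((u.erase m).erase x)) ≤ toColex (u.erase m) := by
    conv_rhs => rw [← insert_erase hx]
    exact (Colex.insert_le_insert h0' (notMem_erase _ _)).2 (Nat.zero_le _)
  have hcard : #(insert 0 ((u.erase m).erase x)) = d := by
    rw [card_insert_of_notMem h0', card_erase_add_one hx, ((hF m).1 _ hw).2]
  have hmem := ((hF m).2 _ hw _ (Set.subset_univ _) hcard hle).2
  rwa [insert_comm, erase_right_comm, insert_erase (mem_erase.2 ⟨hxm.ne', max'_mem _ _⟩)] at hmem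

lemma mem_of_mem_of_zero_mem {d : ℕ} (hd : 2 ≤ d) {𝒢 ℋ : Finset (Finset ℕ)} (hcard : #𝒢 ≤ #ℋ)
    (hℋd : ∀ u ∈ ℋ, #u = d) (h𝒢 : IsCompressedIn Set.univ d ↑𝒢)
    (hl : IsCompressedIn {j | 0 < j} (d - 1) (hatL ↑ℋ 0))
    (hr : ∀ k, IsCompressedIn Set.univ (d - 1) (hatR ↑ℋ k))
    {u₀ : Finset ℕ} (hu₀ : u₀ ∈ 𝒢) (h0 : 0 ∈ u₀) : u₀ ∈ ℋ := by
  by_contra hu₀ℋ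
  have hs₀ : #(u₀.erase 0) = d - 1 := by rw [card_erase_of_mem h0, (h𝒢.1 u₀ hu₀).2]
  have hsub : ℋ ⊆ 𝒢.erase u₀ := by
    intro u hu
    obtain ⟨x, w, hxw, rfl, hw⟩ :=
      exists_insert_eq_and_insert_zero_mem hr (mem_coe.2 hu) (by rw [hℋd _ hu]; omega)
    have hwL : w ∈ hatL ↑ℋ 0 := ⟨fun y hy => (Nat.zero_le x).trans_lt (hxw y hy), hw⟩
    have hw_lt : toColex w < toColex (u₀.erase 0) := lt_of_not_ge fun hle => hu₀ℋ <| by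
      simpa [insert_erase h0] using
        (hl.2 w hwL _ (fun y hy => Nat.pos_of_ne_zero (ne_of_mem_erase hy)) hs₀ hle).2
    have hlt : toColex (insert x w) < toColex u₀ := by
      simpa [insert_erase h0] using
        toColex_insert_lt_toColex_insert hw_lt (by rw [(hl.1 w hwL).2, hs₀]) hxw 0
    exact mem_erase.2 ⟨fun h => hlt.ne (congrArg toColex h),
      h𝒢.2 u₀ hu₀ _ (Set.subset_univ _) (hℋd _ hu) hlt.le⟩
  have := card_le_card hsub
  rw [card_erase_of_mem hu₀] at this
  have : 0 < #𝒢 := card_pos.2 ⟨u₀, hu₀⟩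
  omega

theorem stmt12_general (d : ℕ) (hd : 1 ≤ d) (G H : Set (Finset ℕ))
    (hGfin : G.Finite) (hHfin : H.Finite) (hHd : ∀ u ∈ H, u.card = d)
    (hcard : G.ncard = H.ncard)
    (hGc : IsCompressedIn Set.univ d G)
    (hl : ∀ k : ℕ, IsCompressedIn {j | k < j} (d - 1) (hatL H k))
    (hr : ∀ k : ℕ, IsCompressedIn Set.univ (d - 1) (hatR H k)) :
    (incF G).ncard ≤ (incF H).ncard := by
  lift G to Finset (Finset ℕ) using hGfin
  lift H to Finset (Finset ℕ) using hHfin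
  rw [Set.ncard_coe_finset, Set.ncard_coe_finset] at hcard
  have hG := ncard_incF_le_sum_mex_add_one hGc
  have hH := sum_mex_add_one_le_ncard_incF H
  simp only [sum_add_distrib, sum_const, smul_eq_mul, mul_one] at hG hH
  rcases hd.eq_or_lt with rfl | hd2
  · have hG1 := sum_mex_le_one fun u hu => (hGc.1 u hu).2
    rcases H.eq_empty_or_nonempty with rfl | hHne
    · obtain rfl : G = ∅ := card_eq_zero.1 (by simpa using hcard)
      exact le_rfl
    · have := card_lt_ncard_incF hHne fun h => by simpa using hHd ∅ h
      omega
  · have := sum_mex_le_sum_mex fun u hu h0 =>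
      mem_of_mem_of_zero_mem hd2 hcard.le hHd hGc (hl 0) hr hu h0
    omega

theorem stmt12 (d : ℕ) (hd : 1 ≤ d) (G H : Set (Finset ℕ))
    (hGfin : G.Finite) (hGd : ∀ u ∈ G, u.card = d)
    (hHfin : H.Finite) (hHd : ∀ u ∈ H, u.card = d)
    (hcard : G.ncard = H.ncard)
    (hGc : IsCompressedIn Set.univ d G)
    (hl : ∀ k : ℕ, IsCompressedIn {j | k < j} (d - 1) (hatL H k))
    (hr : ∀ k : ℕ, IsCompressedIn Set.univ (d - 1) (hatR H k)) :
    (incF G).ncard ≤ (incF H).ncard :=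
  stmt12_general d hd G H hGfin hHfin hHd hcard hGc hl hr
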